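/- Every modal formula φ over the extended De Morgan basis {¬,∧,∨,↔,⊤,⊥} (with ◇) is equivalent over S5 to a formula φ' of depth at most 8·(1 + log₂‖φ‖), where ‖φ‖ is the number of leaves of the syntax tree of φ. Consequently (after eliminating ↔ via a ↔ b ≡ (a∧b)∨(¬a∧¬b), at the cost of tripling the depth), φ has an equivalent De Morgan formula over S5 of size polynomial in |φ|. -/
import Mathlib


/-- Modal formulas over the extended De Morgan basis `{¬, ∧, ∨, ↔, ⊤, ⊥}` with `◇`. -/
inductive MF where
  | var : ℕ → MF
  | top : MF
  | bot : MF
  | neg : MF → MF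
  | and : MF → MF → MF
  | or  : MF → MF → MF
  | iff : MF → MF → MF
  | dia : MF → MF

namespace MF

/-- Kripke semantics. -/
def sat {W : Type} (R : W → W → Prop) (V : ℕ → W → Prop) : W → MF → Prop
  | w, var n => V n w
  | _, top => True
  | _, bot => False
  | w, neg φ => ¬ sat R V w φ
  | w, and φ ψ => sat R V w φ ∧ sat R V w ψ
  | w, or φ ψ => sat R V w φ ∨ sat R V w ψ
  | w, iff φ ψ => (sat R V w φ ↔ sat R V w ψ)
  | w, dia φ => ∃ w', R w w' ∧ sat R V w' φ

/-- Number of leaves of the syntax tree (the norm `‖φ‖`). -/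
def norm : MF → ℕ
  | var _ => 1
  | top => 1
  | bot => 1
  | neg φ => norm φ
  | and φ ψ => norm φ + norm ψ
  | or φ ψ => norm φ + norm ψ
  | iff φ ψ => norm φ + norm ψ
  | dia φ => norm φ

/-- Depth of the syntax tree (`0` for leaves). -/
def depth : MF → ℕ
  | var _ => 0
  | top => 0
  | bot => 0
  | neg φ => depth φ + 1
  | and φ ψ => max (depth φ) (depth ψ) + 1
  | or φ ψ => max (depth φ) (depth ψ) + 1
  | iff φ ψ => max (depth φ) (depth ψ) + 1
  | dia φ => depth φ + 1

/-- Number of nodes of the syntax tree (the size `|φ|`). -/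
def size : MF → ℕ
  | var _ => 1
  | top => 1
  | bot => 1
  | neg φ => size φ + 1
  | and φ ψ => size φ + size ψ + 1
  | or φ ψ => size φ + size ψ + 1
  | iff φ ψ => size φ + size ψ + 1
  | dia φ => size φ + 1

/-- The formula contains no bi-implication, i.e., is over the plain De Morgan basis. -/
def iffFree : MF → Prop
  | var _ => True
  | top => True
  | bot => True
  | neg φ => iffFree φ
  | and φ ψ => iffFree φ ∧ iffFree ψ
  | or φ ψ => iffFree φ ∧ iffFree ψ
  | iff _ _ => False
  | dia φ => iffFree φ

end MF

/-- Equivalence over all S5 Kripke structures. -/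
def EquivS5 (φ ψ : MF) : Prop :=
  ∀ (W : Type) (R : W → W → Prop) (V : ℕ → W → Prop), Equivalence R →
    ∀ w : W, MF.sat R V w φ ↔ MF.sat R V w ψ

section Aux
open MF

inductive Fr where
  | negF | diaF
  | andL (b : MF) | andR (a : MF)
  | orL (b : MF) | orR (a : MF)
  | iffL (b : MF) | iffR (a : MF)

def Fr.app : Fr → MF → MF
  | negF, ψ => ψ.neg
  | diaF, ψ => ψ.dia
  | andL b, ψ => ψ.and b
  | andR a, ψ => a.and ψ
  | orL b, ψ => ψ.or b
  | orR a, ψ => a.or ψ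
  | iffL b, ψ => ψ.iff b
  | iffR a, ψ => a.iff ψ

abbrev Ctx := List Fr

def fill : Ctx → MF → MF
  | [], ψ => ψ
  | f :: C, ψ => f.app (fill C ψ)

def Fr.cnorm : Fr → ℕ
  | negF => 0 | diaF => 0
  | andL b => b.norm | andR a => a.norm
  | orL b => b.norm | orR a => a.norm
  | iffL b => b.norm | iffR a => a.norm

def cnorm (C : Ctx) : ℕ := (C.map Fr.cnorm).sum

lemma norm_app (f : Fr) (ψ : MF) : (f.app ψ).norm = f.cnorm + ψ.norm := by
  cases f <;> simp [Fr.app, Fr.cnorm, MF.norm] <;> omega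

lemma norm_fill (C : Ctx) (ψ : MF) : (fill C ψ).norm = cnorm C + ψ.norm := by
  induction C with
  | nil => simp [fill, cnorm]
  | cons f C ih => simp [fill, norm_app, ih, cnorm]; omega

lemma fill_append (C₁ C₂ : Ctx) (ψ : MF) : fill (C₁ ++ C₂) ψ = fill C₁ (fill C₂ ψ) := by
  induction C₁ with
  | nil => simp [fill]
  | cons f C ih => simp [fill, ih]

lemma norm_pos (φ : MF) : 1 ≤ φ.norm := by
  induction φ <;> simp [MF.norm] <;> omega

variable {W : Type} {R : W → W → Prop} {V : ℕ → W → Prop}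

lemma sat_app_congr (f : Fr) (hf : f ≠ Fr.diaF) {ψ₁ ψ₂ : MF} {w : W}
    (h : sat R V w ψ₁ ↔ sat R V w ψ₂) :
    sat R V w (f.app ψ₁) ↔ sat R V w (f.app ψ₂) := by
  cases f <;> simp_all [Fr.app, sat]

lemma sat_fill_congr (C : Ctx) {ψ₁ ψ₂ : MF} (h : ∀ v, sat R V v ψ₁ ↔ sat R V v ψ₂) :
    ∀ w, sat R V w (fill C ψ₁) ↔ sat R V w (fill C ψ₂) := by
  induction C with
  | nil => exact h
  | cons f C ih =>
    intro w
    cases f <;> simp [fill, Fr.app, sat, ih w] <;>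
      exact ⟨fun ⟨v, hv, hs⟩ => ⟨v, hv, (ih v).1 hs⟩, fun ⟨v, hv, hs⟩ => ⟨v, hv, (ih v).2 hs⟩⟩

def diaFree (C : Ctx) : Prop := ∀ f ∈ C, f ≠ Fr.diaF

lemma sat_fill_diafree (C : Ctx) (hC : diaFree C) (θ : MF) (w : W) :
    sat R V w (fill C θ) ↔
      ((sat R V w θ ∧ sat R V w (fill C MF.top)) ∨ (¬ sat R V w θ ∧ sat R V w (fill C MF.bot))) := by
  induction C generalizing w with
  | nil => by_cases h : sat R V w θ <;> simp [fill, sat, h]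
  | cons f C ih =>
    have hf : f ≠ Fr.diaF := hC f (by simp)
    have hC' : diaFree C := fun g hg => hC g (by simp [hg])
    by_cases h : sat R V w θ
    · have h1 : sat R V w (fill C θ) ↔ sat R V w (fill C MF.top) := by
        rw [ih hC' w]; tauto
      have := sat_app_congr (w := w) f hf h1
      simp only [fill]; tauto
    · have h1 : sat R V w (fill C θ) ↔ sat R V w (fill C MF.bot) := by
        rw [ih hC' w]; tauto
      have := sat_app_congr (w := w) f hf h1
      simp only [fill]; tauto

lemma sat_fill_inv (hR : Equivalence R) (C : Ctx) (ψ₁ ψ₂ : MF) :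
    ∀ w, (∀ v, R w v → (sat R V v ψ₁ ↔ sat R V v ψ₂)) →
      (sat R V w (fill C ψ₁) ↔ sat R V w (fill C ψ₂)) := by
  induction C with
  | nil => exact fun w h => h w (hR.refl w)
  | cons f C ih =>
    intro w h
    cases f <;> simp only [fill, Fr.app, sat] <;>
      first
      | (exact ⟨fun ⟨v, hv, hs⟩ => ⟨v, hv, (ih v (fun u hu => h u (hR.trans hv hu))).1 hs⟩,
          fun ⟨v, hv, hs⟩ => ⟨v, hv, (ih v (fun u hu => h u (hR.trans hv hu))).2 hs⟩⟩)
      | (have := ih w h; tauto)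

lemma sat_dia_inv (hR : Equivalence R) (χ : MF) {w v : W} (hwv : R w v) :
    sat R V w (MF.dia χ) ↔ sat R V v (MF.dia χ) := by
  simp only [sat]
  exact ⟨fun ⟨u, hu, hs⟩ => ⟨u, hR.trans (hR.symm hwv) hu, hs⟩,
    fun ⟨u, hu, hs⟩ => ⟨u, hR.trans hwv hu, hs⟩⟩

end Aux
section Aux2
open MF

variable {W : Type} {R : W → W → Prop} {V : ℕ → W → Prop}

lemma sat_modal_cond (hR : Equivalence R) (C₁ C₂ : Ctx) (hC₂ : diaFree C₂) (θ : MF) (w : W) :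
    sat R V w (fill (C₁ ++ Fr.diaF :: C₂) θ) ↔
      ((sat R V w (((θ.and (fill C₂ MF.top)).dia).or (((θ.neg).and (fill C₂ MF.bot)).dia)) ∧
          sat R V w (fill C₁ MF.top)) ∨
       (¬ sat R V w (((θ.and (fill C₂ MF.top)).dia).or (((θ.neg).and (fill C₂ MF.bot)).dia)) ∧
          sat R V w (fill C₁ MF.bot))) := by
  set E : MF := ((θ.and (fill C₂ MF.top)).dia).or (((θ.neg).and (fill C₂ MF.bot)).dia) with hE
  have hpt : ∀ v, sat R V v ((fill C₂ θ).dia) ↔ sat R V v E := by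
    intro v
    simp only [hE, sat]
    constructor
    · rintro ⟨u, hu, hs⟩
      rcases (sat_fill_diafree C₂ hC₂ θ u).1 hs with ⟨h1, h2⟩ | ⟨h1, h2⟩
      · exact Or.inl ⟨u, hu, h1, h2⟩
      · exact Or.inr ⟨u, hu, h1, h2⟩
    · rintro (⟨u, hu, h1, h2⟩ | ⟨u, hu, h1, h2⟩)
      · exact ⟨u, hu, (sat_fill_diafree C₂ hC₂ θ u).2 (Or.inl ⟨h1, h2⟩)⟩
      · exact ⟨u, hu, (sat_fill_diafree C₂ hC₂ θ u).2 (Or.inr ⟨h1, h2⟩)⟩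
  have step1 : sat R V w (fill (C₁ ++ Fr.diaF :: C₂) θ) ↔ sat R V w (fill C₁ E) := by
    rw [fill_append]
    have : fill (Fr.diaF :: C₂) θ = (fill C₂ θ).dia := rfl
    rw [this]
    exact sat_fill_congr C₁ hpt w
  have hEinv : ∀ v, R w v → (sat R V v E ↔ sat R V w E) := by
    intro v hv
    have h1 := sat_dia_inv (V := V) hR (θ.and (fill C₂ MF.top)) hv
    have h2 := sat_dia_inv (V := V) hR ((θ.neg).and (fill C₂ MF.bot)) hv
    simp only [hE, sat] at h1 h2 ⊢
    exact or_congr h1.symm h2.symm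
  by_cases hw : sat R V w E
  · have h2 : sat R V w (fill C₁ E) ↔ sat R V w (fill C₁ MF.top) := by
      apply sat_fill_inv hR C₁ E MF.top w
      intro v hv
      simp only [sat]
      exact ⟨fun _ => trivial, fun _ => (hEinv v hv).2 hw⟩
    rw [step1, h2]; tauto
  · have h2 : sat R V w (fill C₁ E) ↔ sat R V w (fill C₁ MF.bot) := by
      apply sat_fill_inv hR C₁ E MF.bot w
      intro v hv
      simp only [sat]
      exact ⟨fun h => hw ((hEinv v hv).1 h), fun h => absurd h not_false⟩
    rw [step1, h2]; tauto

lemma ctx_split (C : Ctx) :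
    diaFree C ∨ ∃ C₁ C₂, C = C₁ ++ Fr.diaF :: C₂ ∧ diaFree C₂ := by
  induction C with
  | nil => exact Or.inl (by intro f hf; cases hf)
  | cons f C ih =>
    rcases ih with h | ⟨C₁, C₂, h1, h2⟩
    · by_cases hf : f = Fr.diaF
      · exact Or.inr ⟨[], C, by simp [hf], h⟩
      · refine Or.inl ?_
        intro g hg
        rcases List.mem_cons.mp hg with hg | hg
        · simpa [hg] using hf
        · exact h g hg
    · exact Or.inr ⟨f :: C₁, C₂, by simp [h1], h2⟩

lemma cnorm_append (C₁ C₂ : Ctx) : cnorm (C₁ ++ Fr.diaF :: C₂) = cnorm C₁ + cnorm C₂ := by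
  simp [cnorm, Fr.cnorm]

/-- Spira split. -/
lemma split (N : ℕ) (hN : 2 ≤ N) :
    ∀ φ : MF, N / 2 < φ.norm →
      ∃ (C : Ctx) (α β : MF),
        (φ = fill C (α.and β) ∨ φ = fill C (α.or β) ∨ φ = fill C (α.iff β)) ∧
        α.norm ≤ N / 2 ∧ β.norm ≤ N / 2 ∧ N / 2 < α.norm + β.norm := by
  intro φ
  induction φ with
  | var n => intro h; simp [MF.norm] at h; omega
  | top => intro h; simp [MF.norm] at h; omega
  | bot => intro h; simp [MF.norm] at h; omega
  | neg ψ ih =>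
    intro h
    rcases ih (by simpa [MF.norm] using h) with ⟨C, α, β, h1, h2⟩
    exact ⟨Fr.negF :: C, α, β, by rcases h1 with h1|h1|h1 <;> simp [fill, Fr.app, h1], h2⟩
  | dia ψ ih =>
    intro h
    rcases ih (by simpa [MF.norm] using h) with ⟨C, α, β, h1, h2⟩
    exact ⟨Fr.diaF :: C, α, β, by rcases h1 with h1|h1|h1 <;> simp [fill, Fr.app, h1], h2⟩
  | and α β ihα ihβ =>
    intro h
    by_cases hα : N / 2 < α.norm
    · rcases ihα hα with ⟨C, a, b, h1, h2⟩
      exact ⟨Fr.andL β :: C, a, b, by rcases h1 with h1|h1|h1 <;> simp [fill, Fr.app, h1], h2⟩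
    · by_cases hβ : N / 2 < β.norm
      · rcases ihβ hβ with ⟨C, a, b, h1, h2⟩
        exact ⟨Fr.andR α :: C, a, b, by rcases h1 with h1|h1|h1 <;> simp [fill, Fr.app, h1], h2⟩
      · exact ⟨[], α, β, Or.inl rfl, by omega, by omega, by simpa [MF.norm] using h⟩
  | or α β ihα ihβ =>
    intro h
    by_cases hα : N / 2 < α.norm
    · rcases ihα hα with ⟨C, a, b, h1, h2⟩
      exact ⟨Fr.orL β :: C, a, b, by rcases h1 with h1|h1|h1 <;> simp [fill, Fr.app, h1], h2⟩
    · by_cases hβ : N / 2 < β.norm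
      · rcases ihβ hβ with ⟨C, a, b, h1, h2⟩
        exact ⟨Fr.orR α :: C, a, b, by rcases h1 with h1|h1|h1 <;> simp [fill, Fr.app, h1], h2⟩
      · exact ⟨[], α, β, Or.inr (Or.inl rfl), by omega, by omega, by simpa [MF.norm] using h⟩
  | iff α β ihα ihβ =>
    intro h
    by_cases hα : N / 2 < α.norm
    · rcases ihα hα with ⟨C, a, b, h1, h2⟩
      exact ⟨Fr.iffL β :: C, a, b, by rcases h1 with h1|h1|h1 <;> simp [fill, Fr.app, h1], h2⟩
    · by_cases hβ : N / 2 < β.norm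
      · rcases ihβ hβ with ⟨C, a, b, h1, h2⟩
        exact ⟨Fr.iffR α :: C, a, b, by rcases h1 with h1|h1|h1 <;> simp [fill, Fr.app, h1], h2⟩
      · exact ⟨[], α, β, Or.inr (Or.inr rfl), by omega, by omega, by simpa [MF.norm] using h⟩

end Aux2
section Aux3
open MF

lemma equiv_refl (φ : MF) : EquivS5 φ φ := fun _ _ _ _ _ => Iff.rfl

lemma equiv_trans {φ ψ χ : MF} (h1 : EquivS5 φ ψ) (h2 : EquivS5 ψ χ) : EquivS5 φ χ :=
  fun W R V hR w => (h1 W R V hR w).trans (h2 W R V hR w)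

lemma equiv_neg_congr {φ ψ : MF} (h : EquivS5 φ ψ) : EquivS5 φ.neg ψ.neg :=
  fun W R V hR w => by simp only [sat]; rw [h W R V hR w]

lemma equiv_dia_congr {φ ψ : MF} (h : EquivS5 φ ψ) : EquivS5 φ.dia ψ.dia :=
  fun W R V hR w => by
    simp only [sat]
    exact ⟨fun ⟨v, hv, hs⟩ => ⟨v, hv, (h W R V hR v).1 hs⟩,
      fun ⟨v, hv, hs⟩ => ⟨v, hv, (h W R V hR v).2 hs⟩⟩

lemma equiv_and_congr {φ₁ ψ₁ φ₂ ψ₂ : MF} (h1 : EquivS5 φ₁ ψ₁) (h2 : EquivS5 φ₂ ψ₂) :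
    EquivS5 (φ₁.and φ₂) (ψ₁.and ψ₂) :=
  fun W R V hR w => by simp only [sat]; rw [h1 W R V hR w, h2 W R V hR w]

lemma equiv_or_congr {φ₁ ψ₁ φ₂ ψ₂ : MF} (h1 : EquivS5 φ₁ ψ₁) (h2 : EquivS5 φ₂ ψ₂) :
    EquivS5 (φ₁.or φ₂) (ψ₁.or ψ₂) :=
  fun W R V hR w => by simp only [sat]; rw [h1 W R V hR w, h2 W R V hR w]

lemma equiv_iff_congr {φ₁ ψ₁ φ₂ ψ₂ : MF} (h1 : EquivS5 φ₁ ψ₁) (h2 : EquivS5 φ₂ ψ₂) :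
    EquivS5 (φ₁.iff φ₂) (ψ₁.iff ψ₂) :=
  fun W R V hR w => by simp only [sat]; rw [h1 W R V hR w, h2 W R V hR w]

lemma equiv_negneg (φ : MF) : EquivS5 φ.neg.neg φ :=
  fun _ _ _ _ _ => by simp only [sat]; tauto

lemma equiv_diadia (φ : MF) : EquivS5 φ.dia.dia φ.dia :=
  fun W R V hR w => by
    simp only [sat]
    exact ⟨fun ⟨v, hv, u, hu, hs⟩ => ⟨u, hR.trans hv hu, hs⟩,
      fun ⟨u, hu, hs⟩ => ⟨w, hR.refl w, u, hu, hs⟩⟩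

lemma equiv_dianegdia (φ : MF) : EquivS5 φ.dia.neg.dia φ.dia.neg :=
  fun W R V hR w => by
    simp only [sat]
    constructor
    · rintro ⟨v, hv, hn⟩ ⟨u, hu, hs⟩
      exact hn ⟨u, hR.trans (hR.symm hv) hu, hs⟩
    · intro hn
      refine ⟨w, hR.refl w, fun ⟨u, hu, hs⟩ => hn ⟨u, hu, hs⟩⟩

lemma equiv_negand (α β : MF) : EquivS5 (α.and β).neg (α.neg.or β.neg) :=
  fun _ _ _ _ _ => by simp only [sat]; tauto

lemma equiv_negor (α β : MF) : EquivS5 (α.or β).neg (α.neg.and β.neg) :=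
  fun _ _ _ _ _ => by simp only [sat]; tauto

lemma equiv_negiff (α β : MF) : EquivS5 (α.iff β).neg (α.iff β.neg) :=
  fun _ _ _ _ _ => by simp only [sat]; tauto

/-- The six S5 modalities, with depth bounded linearly in the number of leaves. -/
lemma six (φ : MF) : ∃ e1 e2 e3 e4 e5 e6 : MF,
    EquivS5 φ e1 ∧ EquivS5 φ.neg e2 ∧ EquivS5 φ.dia e3 ∧ EquivS5 φ.dia.neg e4 ∧
    EquivS5 φ.neg.dia e5 ∧ EquivS5 φ.neg.dia.neg e6 ∧
    e1.depth + 1 ≤ 4 * φ.norm ∧ e2.depth + 1 ≤ 4 * φ.norm ∧ e3.depth + 1 ≤ 4 * φ.norm ∧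
    e4.depth + 1 ≤ 4 * φ.norm ∧ e5.depth + 1 ≤ 4 * φ.norm ∧ e6.depth + 1 ≤ 4 * φ.norm := by
  induction φ with
  | var n =>
    exact ⟨_, _, _, _, _, _, equiv_refl (var n), equiv_refl _, equiv_refl _, equiv_refl _,
      equiv_refl _, equiv_refl _, by simp [MF.depth, MF.norm]⟩
  | top =>
    exact ⟨_, _, _, _, _, _, equiv_refl MF.top, equiv_refl _, equiv_refl _, equiv_refl _,
      equiv_refl _, equiv_refl _, by simp [MF.depth, MF.norm]⟩
  | bot =>
    exact ⟨_, _, _, _, _, _, equiv_refl MF.bot, equiv_refl _, equiv_refl _, equiv_refl _,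
      equiv_refl _, equiv_refl _, by simp [MF.depth, MF.norm]⟩
  | neg ψ ih =>
    obtain ⟨a1, a2, a3, a4, a5, a6, q1, q2, q3, q4, q5, q6, d1, d2, d3, d4, d5, d6⟩ := ih
    refine ⟨a2, a1, a5, a6, a3, a4, q2, equiv_trans (equiv_negneg ψ) q1, q5, q6,
      equiv_trans (equiv_dia_congr (equiv_negneg ψ)) q3,
      equiv_trans (equiv_neg_congr (equiv_dia_congr (equiv_negneg ψ))) q4, ?_⟩
    simp only [MF.norm]
    exact ⟨d2, d1, d5, d6, d3, d4⟩
  | dia ψ ih =>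
    obtain ⟨a1, a2, a3, a4, a5, a6, q1, q2, q3, q4, q5, q6, d1, d2, d3, d4, d5, d6⟩ := ih
    refine ⟨a3, a4, a3, a4, a4, a3, q3, q4,
      equiv_trans (equiv_diadia ψ) q3,
      equiv_trans (equiv_neg_congr (equiv_diadia ψ)) q4,
      equiv_trans (equiv_dianegdia ψ) q4,
      equiv_trans (equiv_neg_congr (equiv_dianegdia ψ))
        (equiv_trans (equiv_negneg ψ.dia) q3), ?_⟩
    simp only [MF.norm]
    exact ⟨d3, d4, d3, d4, d4, d3⟩
  | and α β ihα ihβ =>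
    obtain ⟨a1, a2, a3, a4, a5, a6, q1, q2, q3, q4, q5, q6, d1, d2, d3, d4, d5, d6⟩ := ihα
    obtain ⟨b1, b2, b3, b4, b5, b6, r1, r2, r3, r4, r5, r6, e1, e2, e3, e4, e5, e6⟩ := ihβ
    have hpos : a1.depth + 1 ≤ 4 * α.norm := d1
    have hP : EquivS5 (α.and β) (a1.and b1) := equiv_and_congr q1 r1
    have hM : EquivS5 (α.and β).neg (a2.or b2) :=
      equiv_trans (equiv_negand α β) (equiv_or_congr q2 r2)
    refine ⟨a1.and b1, a2.or b2, (a1.and b1).dia, (a1.and b1).dia.neg,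
      (a2.or b2).dia, (a2.or b2).dia.neg,
      hP, hM, equiv_dia_congr hP, equiv_neg_congr (equiv_dia_congr hP),
      equiv_dia_congr hM, equiv_neg_congr (equiv_dia_congr hM), ?_⟩
    have hα := norm_pos α
    have hβ := norm_pos β
    simp only [MF.depth, MF.norm]
    omega
  | or α β ihα ihβ =>
    obtain ⟨a1, a2, a3, a4, a5, a6, q1, q2, q3, q4, q5, q6, d1, d2, d3, d4, d5, d6⟩ := ihα
    obtain ⟨b1, b2, b3, b4, b5, b6, r1, r2, r3, r4, r5, r6, e1, e2, e3, e4, e5, e6⟩ := ihβ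
    have hP : EquivS5 (α.or β) (a1.or b1) := equiv_or_congr q1 r1
    have hM : EquivS5 (α.or β).neg (a2.and b2) :=
      equiv_trans (equiv_negor α β) (equiv_and_congr q2 r2)
    refine ⟨a1.or b1, a2.and b2, (a1.or b1).dia, (a1.or b1).dia.neg,
      (a2.and b2).dia, (a2.and b2).dia.neg,
      hP, hM, equiv_dia_congr hP, equiv_neg_congr (equiv_dia_congr hP),
      equiv_dia_congr hM, equiv_neg_congr (equiv_dia_congr hM), ?_⟩
    have hα := norm_pos α
    have hβ := norm_pos β
    simp only [MF.depth, MF.norm]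
    omega
  | iff α β ihα ihβ =>
    obtain ⟨a1, a2, a3, a4, a5, a6, q1, q2, q3, q4, q5, q6, d1, d2, d3, d4, d5, d6⟩ := ihα
    obtain ⟨b1, b2, b3, b4, b5, b6, r1, r2, r3, r4, r5, r6, e1, e2, e3, e4, e5, e6⟩ := ihβ
    have hP : EquivS5 (α.iff β) (a1.iff b1) := equiv_iff_congr q1 r1
    have hM : EquivS5 (α.iff β).neg (a1.iff b2) :=
      equiv_trans (equiv_negiff α β) (equiv_iff_congr q1 r2)
    refine ⟨a1.iff b1, a1.iff b2, (a1.iff b1).dia, (a1.iff b1).dia.neg,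
      (a1.iff b2).dia, (a1.iff b2).dia.neg,
      hP, hM, equiv_dia_congr hP, equiv_neg_congr (equiv_dia_congr hP),
      equiv_dia_congr hM, equiv_neg_congr (equiv_dia_congr hM), ?_⟩
    have hα := norm_pos α
    have hβ := norm_pos β
    simp only [MF.depth, MF.norm]
    omega

end Aux3
section Aux4
open Real

lemma logb_ge_of_pow {m k n : ℕ} (hn : 1 ≤ n) (h : 2^m ≤ n^k) :
    (m : ℝ) ≤ k * Real.logb 2 n := by
  have h1 : ((2:ℝ))^m ≤ (n:ℝ)^k := by exact_mod_cast h
  have h2 : Real.logb 2 ((2:ℝ)^m) ≤ Real.logb 2 ((n:ℝ)^k) :=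
    Real.logb_le_logb_of_le (by norm_num) (by positivity) h1
  rwa [Real.logb_pow, Real.logb_pow, Real.logb_self_eq_one (by norm_num),
    mul_one] at h2

lemma bound_L1 {m n : ℕ} (hm : 1 ≤ m) (h : 2*m ≤ n) :
    8 + 8 * Real.logb 2 m ≤ 8 * Real.logb 2 n := by
  have h1 : Real.logb 2 ((2*m : ℕ)) ≤ Real.logb 2 n :=
    Real.logb_le_logb_of_le (by norm_num) (by positivity) (by exact_mod_cast h)
  have e1 : Real.logb 2 ((2*m : ℕ)) = 1 + Real.logb 2 m := by
    push_cast
    rw [Real.logb_mul (by norm_num) (by positivity), Real.logb_self_eq_one (by norm_num)]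
  rw [e1] at h1
  linarith

lemma bound_L2 {c n : ℕ} (hc : 1 ≤ c) (h : 2*c ≤ n+1) (hn : 9 ≤ n) :
    6 + 8 * Real.logb 2 c ≤ 8 * Real.logb 2 n := by
  have key : (8:ℕ) * c^4 ≤ n^4 := by
    obtain ⟨k, hk⟩ : ∃ k, n+1 = k := ⟨_, rfl⟩
    rw [hk] at h
    have h9 : 9*k ≤ 10*n := by omega
    have h4 : (9*k)^4 ≤ (10*n)^4 := Nat.pow_le_pow_left h9 4
    rw [mul_pow, mul_pow] at h4
    norm_num at h4
    have h5 : (2*c)^4 ≤ k^4 := Nat.pow_le_pow_left h 4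
    rw [mul_pow] at h5
    norm_num at h5
    zify at h4 h5 ⊢
    nlinarith [pow_nonneg (by positivity : (0:ℤ) ≤ (c:ℤ)) 4]
  have h1 : Real.logb 2 ((8:ℕ) * c^4 : ℕ) ≤ Real.logb 2 ((n:ℝ)^4) := by
    rw [show ((n:ℝ)^4) = (((n^4 : ℕ):ℝ)) by push_cast; ring]
    exact Real.logb_le_logb_of_le (by norm_num) (by positivity) (by exact_mod_cast key)
  rw [Real.logb_pow] at h1
  have h2 : Real.logb 2 ((8:ℕ) * c^4 : ℕ) = 3 + 4 * Real.logb 2 c := by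
    push_cast
    rw [Real.logb_mul (by norm_num) (by positivity), Real.logb_pow,
      show ((8:ℝ)) = 2^(3:ℕ) by norm_num, Real.logb_pow,
      Real.logb_self_eq_one (by norm_num)]
    ring
  rw [h2] at h1
  push_cast at h1
  linarith

lemma bound_base {n dep : ℕ} (h1 : 1 ≤ n) (h8 : n ≤ 8) (hd : dep + 1 ≤ 4*n) :
    (dep : ℝ) ≤ 8 + 8 * Real.logb 2 n := by
  have hd' : (dep : ℝ) ≤ 4*n - 1 := by
    have : (dep : ℝ) + 1 ≤ 4*n := by exact_mod_cast hd
    linarith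
  have key : ∃ m : ℕ, 4*n ≤ m + 9 ∧ 2^m ≤ n^8 := by
    interval_cases n
    · exact ⟨0, by norm_num⟩
    · exact ⟨8, by norm_num⟩
    · exact ⟨3, by norm_num⟩
    · exact ⟨16, by norm_num⟩
    · exact ⟨11, by norm_num⟩
    · exact ⟨15, by norm_num⟩
    · exact ⟨19, by norm_num⟩
    · exact ⟨23, by norm_num⟩
  obtain ⟨m, hm1, hm2⟩ := key
  have := logb_ge_of_pow h1 hm2
  have hm1' : (4:ℝ)*n ≤ m + 9 := by exact_mod_cast hm1
  push_cast at this
  linarith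

end Aux4
section Main
open MF

lemma poscond {A A' X X' Y Y' M0 : Prop} (h1 : A ↔ A') (h2 : ¬A ↔ M0)
    (h3 : X ↔ X') (h4 : Y ↔ Y') :
    ((A ∧ X) ∨ (¬A ∧ Y)) ↔ ((A' ∧ X') ∨ (M0 ∧ Y')) := by tauto

lemma negcond {A A' X Y M1 M2 M0 : Prop} (h1 : A ↔ A') (h2 : ¬A ↔ M0)
    (h3 : ¬X ↔ M1) (h4 : ¬Y ↔ M2) :
    (¬((A ∧ X) ∨ (¬A ∧ Y))) ↔ ((A' ∧ M1) ∨ (M0 ∧ M2)) := by tauto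

lemma theta_pieces {α β αp αm βp βm θ : MF}
    (hθ : θ = α.and β ∨ θ = α.or β ∨ θ = α.iff β)
    (qa : EquivS5 α αp) (qa' : EquivS5 α.neg αm)
    (qb : EquivS5 β βp) (qb' : EquivS5 β.neg βm) :
    ∃ θp θm : MF, EquivS5 θ θp ∧ EquivS5 θ.neg θm ∧
      θp.depth ≤ max (max αp.depth αm.depth) (max βp.depth βm.depth) + 1 ∧
      θm.depth ≤ max (max αp.depth αm.depth) (max βp.depth βm.depth) + 1 := by
  rcases hθ with h|h|h <;> subst h
  · exact ⟨αp.and βp, αm.or βm, equiv_and_congr qa qb,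
      equiv_trans (equiv_negand _ _) (equiv_or_congr qa' qb'),
      by simp only [MF.depth]; omega, by simp only [MF.depth]; omega⟩
  · exact ⟨αp.or βp, αm.and βm, equiv_or_congr qa qb,
      equiv_trans (equiv_negor _ _) (equiv_and_congr qa' qb'),
      by simp only [MF.depth]; omega, by simp only [MF.depth]; omega⟩
  · exact ⟨αp.iff βp, αp.iff βm, equiv_iff_congr qa qb,
      equiv_trans (equiv_negiff _ _) (equiv_iff_congr qa qb'),
      by simp only [MF.depth]; omega, by simp only [MF.depth]; omega⟩

set_option maxHeartbeats 1000000 in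
lemma main_balance : ∀ n : ℕ, ∀ φ : MF, φ.norm = n →
    ∃ p m : MF, EquivS5 φ p ∧ EquivS5 φ.neg m ∧
      (p.depth : ℝ) ≤ 8 + 8 * Real.logb 2 n ∧
      (m.depth : ℝ) ≤ 8 + 8 * Real.logb 2 n := by
  intro n
  induction n using Nat.strong_induction_on with
  | _ n IH =>
  intro φ hφn
  by_cases hn8 : n ≤ 8
  · obtain ⟨e1, e2, e3, e4, e5, e6, q1, q2, _, _, _, _, d1, d2, _⟩ := six φ
    exact ⟨e1, e2, q1, q2, hφn ▸ bound_base (norm_pos φ) (by omega : φ.norm ≤ 8) d1,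
      hφn ▸ bound_base (norm_pos φ) (by omega : φ.norm ≤ 8) d2⟩
  · push_neg at hn8
    obtain ⟨C, α, β, hfill, hα, hβ, hab⟩ := split n (by omega) φ (by omega)
    obtain ⟨θ, hθdef, hfillθ⟩ : ∃ θ, (θ = α.and β ∨ θ = α.or β ∨ θ = α.iff β) ∧ φ = fill C θ := by
      rcases hfill with h|h|h
      exacts [⟨_, Or.inl rfl, h⟩, ⟨_, Or.inr (Or.inl rfl), h⟩, ⟨_, Or.inr (Or.inr rfl), h⟩]
    have hθnorm : θ.norm = α.norm + β.norm := by
      rcases hθdef with h|h|h <;> simp [h, MF.norm]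
    have hnfill : n = cnorm C + θ.norm := by
      rw [← hφn, hfillθ, norm_fill]
    have hα1 := norm_pos α
    have hβ1 := norm_pos β
    obtain ⟨αp, αm, qa, qa', da, da'⟩ := IH α.norm (by omega) α rfl
    obtain ⟨βp, βm, qb, qb', db, db'⟩ := IH β.norm (by omega) β rfl
    obtain ⟨θp, θm, qθ, qθ', dθ, dθ'⟩ := theta_pieces hθdef qa qa' qb qb'
    set T : ℝ := 8 + 8 * Real.logb 2 n with hT
    have Ka : (αp.depth : ℝ) + 8 ≤ T := by
      have := bound_L1 hα1 (by omega : 2 * α.norm ≤ n); linarith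
    have Ka' : (αm.depth : ℝ) + 8 ≤ T := by
      have := bound_L1 hα1 (by omega : 2 * α.norm ≤ n); linarith
    have Kb : (βp.depth : ℝ) + 8 ≤ T := by
      have := bound_L1 hβ1 (by omega : 2 * β.norm ≤ n); linarith
    have Kb' : (βm.depth : ℝ) + 8 ≤ T := by
      have := bound_L1 hβ1 (by omega : 2 * β.norm ≤ n); linarith
    have Kθ : (θp.depth : ℝ) + 7 ≤ T := by
      have h4 : θp.depth ≤ αp.depth + 1 ∨ θp.depth ≤ αm.depth + 1 ∨
          θp.depth ≤ βp.depth + 1 ∨ θp.depth ≤ βm.depth + 1 := by omega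
      rcases h4 with h|h|h|h <;>
        (replace h := (Nat.cast_le (α := ℝ)).mpr h; push_cast at h; linarith)
    have Kθ' : (θm.depth : ℝ) + 7 ≤ T := by
      have h4 : θm.depth ≤ αp.depth + 1 ∨ θm.depth ≤ αm.depth + 1 ∨
          θm.depth ≤ βp.depth + 1 ∨ θm.depth ≤ βm.depth + 1 := by omega
      rcases h4 with h|h|h|h <;>
        (replace h := (Nat.cast_le (α := ℝ)).mpr h; push_cast at h; linarith)
    rcases ctx_split C with hfree | ⟨C₁, C₂, hCeq, hC₂free⟩
    · -- ◇-free context case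
      have hcn : (fill C MF.top).norm = cnorm C + 1 := by rw [norm_fill]; rfl
      have hcn' : (fill C MF.bot).norm = cnorm C + 1 := by rw [norm_fill]; rfl
      obtain ⟨CTp, CTm, qct, qct', dct, dct'⟩ := IH (cnorm C + 1) (by omega) (fill C MF.top) hcn
      obtain ⟨CBp, CBm, qcb, qcb', dcb, dcb'⟩ := IH (cnorm C + 1) (by omega) (fill C MF.bot) hcn'
      have KL2 : 6 + 8 * Real.logb 2 (cnorm C + 1 : ℕ) ≤ 8 * Real.logb 2 n :=
        bound_L2 (by omega) (by omega) (by omega)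
      have Kct : (CTp.depth : ℝ) + 6 ≤ T := by linarith
      have Kct' : (CTm.depth : ℝ) + 6 ≤ T := by linarith
      have Kcb : (CBp.depth : ℝ) + 6 ≤ T := by linarith
      have Kcb' : (CBm.depth : ℝ) + 6 ≤ T := by linarith
      refine ⟨(θp.and CTp).or (θm.and CBp), (θp.and CTm).or (θm.and CBm), ?_, ?_, ?_, ?_⟩
      · intro W R V hR w
        have hsat := sat_fill_diafree (R := R) (V := V) C hfree θ w
        have h1 := qθ W R V hR w
        have h2 := qθ' W R V hR w
        have h3 := qct W R V hR w
        have h4 := qcb W R V hR w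
        simp only [sat] at h2 ⊢
        rw [hfillθ, hsat]
        exact poscond h1 h2 h3 h4
      · intro W R V hR w
        have hsat := sat_fill_diafree (R := R) (V := V) C hfree θ w
        have h1 := qθ W R V hR w
        have h2 := qθ' W R V hR w
        have h3 := qct' W R V hR w
        have h4 := qcb' W R V hR w
        simp only [sat] at h2 h3 h4 ⊢
        rw [hfillθ, hsat]
        exact negcond h1 h2 h3 h4
      · have hd : ((θp.and CTp).or (θm.and CBp)).depth ≤ θp.depth + 2 ∨
            ((θp.and CTp).or (θm.and CBp)).depth ≤ CTp.depth + 2 ∨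
            ((θp.and CTp).or (θm.and CBp)).depth ≤ θm.depth + 2 ∨
            ((θp.and CTp).or (θm.and CBp)).depth ≤ CBp.depth + 2 := by
          simp only [MF.depth]; omega
        rcases hd with h|h|h|h <;>
          (replace h := (Nat.cast_le (α := ℝ)).mpr h; push_cast at h; linarith)
      · have hd : ((θp.and CTm).or (θm.and CBm)).depth ≤ θp.depth + 2 ∨
            ((θp.and CTm).or (θm.and CBm)).depth ≤ CTm.depth + 2 ∨
            ((θp.and CTm).or (θm.and CBm)).depth ≤ θm.depth + 2 ∨
            ((θp.and CTm).or (θm.and CBm)).depth ≤ CBm.depth + 2 := by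
          simp only [MF.depth]; omega
        rcases hd with h|h|h|h <;>
          (replace h := (Nat.cast_le (α := ℝ)).mpr h; push_cast at h; linarith)
    · -- context with an innermost ◇ on the path
      subst hCeq
      have hcnC : cnorm (C₁ ++ Fr.diaF :: C₂) = cnorm C₁ + cnorm C₂ := cnorm_append C₁ C₂
      have hc1 : (fill C₁ MF.top).norm = cnorm C₁ + 1 := by rw [norm_fill]; rfl
      have hc1' : (fill C₁ MF.bot).norm = cnorm C₁ + 1 := by rw [norm_fill]; rfl
      have hc2 : (fill C₂ MF.top).norm = cnorm C₂ + 1 := by rw [norm_fill]; rfl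
      have hc2' : (fill C₂ MF.bot).norm = cnorm C₂ + 1 := by rw [norm_fill]; rfl
      obtain ⟨C1Tp, C1Tm, q1t, q1t', d1t, d1t'⟩ := IH (cnorm C₁ + 1) (by omega) (fill C₁ MF.top) hc1
      obtain ⟨C1Bp, C1Bm, q1b, q1b', d1b, d1b'⟩ := IH (cnorm C₁ + 1) (by omega) (fill C₁ MF.bot) hc1'
      obtain ⟨C2Tp, C2Tm, q2t, q2t', d2t, d2t'⟩ := IH (cnorm C₂ + 1) (by omega) (fill C₂ MF.top) hc2
      obtain ⟨C2Bp, C2Bm, q2b, q2b', d2b, d2b'⟩ := IH (cnorm C₂ + 1) (by omega) (fill C₂ MF.bot) hc2'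
      have KL1 : 6 + 8 * Real.logb 2 (cnorm C₁ + 1 : ℕ) ≤ 8 * Real.logb 2 n :=
        bound_L2 (by omega) (by omega) (by omega)
      have KL2 : 6 + 8 * Real.logb 2 (cnorm C₂ + 1 : ℕ) ≤ 8 * Real.logb 2 n :=
        bound_L2 (by omega) (by omega) (by omega)
      have K1t : (C1Tp.depth : ℝ) + 6 ≤ T := by linarith
      have K1t' : (C1Tm.depth : ℝ) + 6 ≤ T := by linarith
      have K1b : (C1Bp.depth : ℝ) + 6 ≤ T := by linarith
      have K1b' : (C1Bm.depth : ℝ) + 6 ≤ T := by linarith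
      have K2t : (C2Tp.depth : ℝ) + 6 ≤ T := by linarith
      have K2b : (C2Bp.depth : ℝ) + 6 ≤ T := by linarith
      set Ep : MF := ((θp.and C2Tp).dia).or ((θm.and C2Bp).dia) with hEp
      have qE : EquivS5 (((θ.and (fill C₂ MF.top)).dia).or (((θ.neg).and (fill C₂ MF.bot)).dia)) Ep :=
        equiv_or_congr (equiv_dia_congr (equiv_and_congr qθ q2t))
          (equiv_dia_congr (equiv_and_congr qθ' q2b))
      refine ⟨(Ep.and C1Tp).or ((Ep.neg).and C1Bp), (Ep.and C1Tm).or ((Ep.neg).and C1Bm),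
        ?_, ?_, ?_, ?_⟩
      · intro W R V hR w
        have hsat := sat_modal_cond (R := R) (V := V) hR C₁ C₂ hC₂free θ w
        have hE := qE W R V hR w
        have h3 := q1t W R V hR w
        have h4 := q1b W R V hR w
        simp only [sat]
        rw [hfillθ, hsat]
        exact poscond hE (not_congr hE) h3 h4
      · intro W R V hR w
        have hsat := sat_modal_cond (R := R) (V := V) hR C₁ C₂ hC₂free θ w
        have hE := qE W R V hR w
        have h3 := q1t' W R V hR w
        have h4 := q1b' W R V hR w
        simp only [sat] at h3 h4 ⊢
        rw [hfillθ, hsat]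
        exact negcond hE (not_congr hE) h3 h4
      · have hd : ((Ep.and C1Tp).or ((Ep.neg).and C1Bp)).depth ≤ θp.depth + 6 ∨
            ((Ep.and C1Tp).or ((Ep.neg).and C1Bp)).depth ≤ θm.depth + 6 ∨
            ((Ep.and C1Tp).or ((Ep.neg).and C1Bp)).depth ≤ C2Tp.depth + 6 ∨
            ((Ep.and C1Tp).or ((Ep.neg).and C1Bp)).depth ≤ C2Bp.depth + 6 ∨
            ((Ep.and C1Tp).or ((Ep.neg).and C1Bp)).depth ≤ C1Tp.depth + 2 ∨
            ((Ep.and C1Tp).or ((Ep.neg).and C1Bp)).depth ≤ C1Bp.depth + 2 := by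
          simp only [hEp, MF.depth]; omega
        rcases hd with h|h|h|h|h|h <;>
          (replace h := (Nat.cast_le (α := ℝ)).mpr h; push_cast at h; linarith)
      · have hd : ((Ep.and C1Tm).or ((Ep.neg).and C1Bm)).depth ≤ θp.depth + 6 ∨
            ((Ep.and C1Tm).or ((Ep.neg).and C1Bm)).depth ≤ θm.depth + 6 ∨
            ((Ep.and C1Tm).or ((Ep.neg).and C1Bm)).depth ≤ C2Tp.depth + 6 ∨
            ((Ep.and C1Tm).or ((Ep.neg).and C1Bm)).depth ≤ C2Bp.depth + 6 ∨
            ((Ep.and C1Tm).or ((Ep.neg).and C1Bm)).depth ≤ C1Tm.depth + 2 ∨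
            ((Ep.and C1Tm).or ((Ep.neg).and C1Bm)).depth ≤ C1Bm.depth + 2 := by
          simp only [hEp, MF.depth]; omega
        rcases hd with h|h|h|h|h|h <;>
          (replace h := (Nat.cast_le (α := ℝ)).mpr h; push_cast at h; linarith)

end Main

section Final
open MF

def deIff : MF → MF
  | .var n => .var n
  | .top => .top
  | .bot => .bot
  | .neg φ => (deIff φ).neg
  | .and φ ψ => (deIff φ).and (deIff ψ)
  | .or φ ψ => (deIff φ).or (deIff ψ)
  | .iff φ ψ => ((deIff φ).and (deIff ψ)).or (((deIff φ).neg).and ((deIff ψ).neg))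
  | .dia φ => (deIff φ).dia

lemma deIff_iffFree (φ : MF) : (deIff φ).iffFree := by
  induction φ <;> simp [deIff, MF.iffFree] <;> tauto

lemma deIff_sat {W : Type} (R : W → W → Prop) (V : ℕ → W → Prop) (φ : MF) :
    ∀ w, sat R V w (deIff φ) ↔ sat R V w φ := by
  induction φ with
  | var n => intro w; exact Iff.rfl
  | top => intro w; exact Iff.rfl
  | bot => intro w; exact Iff.rfl
  | neg φ ih => intro w; simp only [deIff, sat, ih w]
  | and φ ψ ih1 ih2 => intro w; simp only [deIff, sat, ih1 w, ih2 w]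
  | or φ ψ ih1 ih2 => intro w; simp only [deIff, sat, ih1 w, ih2 w]
  | iff φ ψ ih1 ih2 =>
    intro w; simp only [deIff, sat, ih1 w, ih2 w]; tauto
  | dia φ ih =>
    intro w
    simp only [deIff, sat]
    exact exists_congr fun v => and_congr_right fun _ => ih v

lemma deIff_depth (φ : MF) : (deIff φ).depth ≤ 3 * φ.depth := by
  induction φ <;> simp [deIff, MF.depth] <;> omega

lemma size_le_pow (φ : MF) : φ.size + 1 ≤ 2 ^ (φ.depth + 1) := by
  induction φ with
  | var n => simp [MF.size, MF.depth]
  | top => simp [MF.size, MF.depth]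
  | bot => simp [MF.size, MF.depth]
  | neg φ ih =>
    simp only [MF.size, MF.depth]
    have e : 2 ^ (φ.depth + 1 + 1) = 2 ^ (φ.depth + 1) + 2 ^ (φ.depth + 1) := by
      rw [pow_succ]; ring
    omega
  | and φ ψ ih1 ih2 =>
    simp only [MF.size, MF.depth]
    have h1 : 2 ^ (φ.depth + 1) ≤ 2 ^ (max φ.depth ψ.depth + 1) :=
      Nat.pow_le_pow_right (by norm_num) (by omega)
    have h2 : 2 ^ (ψ.depth + 1) ≤ 2 ^ (max φ.depth ψ.depth + 1) :=
      Nat.pow_le_pow_right (by norm_num) (by omega)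
    have e : 2 ^ (max φ.depth ψ.depth + 1 + 1) =
        2 ^ (max φ.depth ψ.depth + 1) + 2 ^ (max φ.depth ψ.depth + 1) := by
      rw [pow_succ]; ring
    omega
  | or φ ψ ih1 ih2 =>
    simp only [MF.size, MF.depth]
    have h1 : 2 ^ (φ.depth + 1) ≤ 2 ^ (max φ.depth ψ.depth + 1) :=
      Nat.pow_le_pow_right (by norm_num) (by omega)
    have h2 : 2 ^ (ψ.depth + 1) ≤ 2 ^ (max φ.depth ψ.depth + 1) :=
      Nat.pow_le_pow_right (by norm_num) (by omega)
    have e : 2 ^ (max φ.depth ψ.depth + 1 + 1) =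
        2 ^ (max φ.depth ψ.depth + 1) + 2 ^ (max φ.depth ψ.depth + 1) := by
      rw [pow_succ]; ring
    omega
  | iff φ ψ ih1 ih2 =>
    simp only [MF.size, MF.depth]
    have h1 : 2 ^ (φ.depth + 1) ≤ 2 ^ (max φ.depth ψ.depth + 1) :=
      Nat.pow_le_pow_right (by norm_num) (by omega)
    have h2 : 2 ^ (ψ.depth + 1) ≤ 2 ^ (max φ.depth ψ.depth + 1) :=
      Nat.pow_le_pow_right (by norm_num) (by omega)
    have e : 2 ^ (max φ.depth ψ.depth + 1 + 1) =
        2 ^ (max φ.depth ψ.depth + 1) + 2 ^ (max φ.depth ψ.depth + 1) := by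
      rw [pow_succ]; ring
    omega
  | dia φ ih =>
    simp only [MF.size, MF.depth]
    have e : 2 ^ (φ.depth + 1 + 1) = 2 ^ (φ.depth + 1) + 2 ^ (φ.depth + 1) := by
      rw [pow_succ]; ring
    omega

lemma norm_le_size (φ : MF) : φ.norm ≤ φ.size := by
  induction φ <;> simp [MF.norm, MF.size] <;> omega

end Final


/-- Balancing in S5: every formula is S5-equivalent to one of logarithmic depth;
consequently, every formula has an S5-equivalent `↔`-free formula of polynomial size. -/
theorem S5_balancing_and_polynomial_translation :
    (∀ φ : MF, ∃ φ' : MF, EquivS5 φ φ' ∧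
      (φ'.depth : ℝ) ≤ 8 * (1 + Real.logb 2 (φ.norm : ℝ))) ∧
    ∃ c d : ℝ, 0 < c ∧ 0 < d ∧
      ∀ φ : MF, ∃ ψ : MF, ψ.iffFree ∧ EquivS5 φ ψ ∧
        (ψ.size : ℝ) ≤ c * (φ.size : ℝ) ^ d := by
  constructor
  · intro φ
    obtain ⟨p, m, hp, _, hd, _⟩ := main_balance φ.norm φ rfl
    exact ⟨p, hp, by linarith [hd, (by ring : 8 * (1 + Real.logb 2 (φ.norm : ℝ)) =
      8 + 8 * Real.logb 2 (φ.norm : ℝ))]⟩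
  · refine ⟨2 ^ 25, 24, by norm_num, by norm_num, ?_⟩
    intro φ
    obtain ⟨p, m, hp, _, hd, _⟩ := main_balance φ.norm φ rfl
    refine ⟨deIff p, deIff_iffFree p, fun W R V hR w => (hp W R V hR w).trans
      (deIff_sat R V p w).symm, ?_⟩
    have hN1 : 1 ≤ φ.norm := norm_pos φ
    have hN1R : (1:ℝ) ≤ (φ.norm : ℝ) := by exact_mod_cast hN1
    have hNpos : (0:ℝ) < (φ.norm : ℝ) := by linarith
    have h1 := size_le_pow (deIff p)
    have h2 := deIff_depth p
    -- real chain
    have hk : ((deIff p).depth + 1 : ℝ) ≤ 25 + 24 * Real.logb 2 (φ.norm : ℝ) := by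
      have h2' : ((deIff p).depth : ℝ) ≤ 3 * (p.depth : ℝ) := by exact_mod_cast h2
      linarith
    have hsz : ((deIff p).size : ℝ) ≤ (2:ℝ) ^ (((deIff p).depth + 1 : ℕ) : ℝ) := by
      rw [Real.rpow_natCast]
      have : ((deIff p).size : ℝ) ≤ ((2 ^ ((deIff p).depth + 1) : ℕ) : ℝ) := by
        exact_mod_cast Nat.le_of_succ_le h1
      simpa using this
    have hmono : (2:ℝ) ^ (((deIff p).depth + 1 : ℕ) : ℝ) ≤
        (2:ℝ) ^ (25 + 24 * Real.logb 2 (φ.norm : ℝ)) := by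
      apply Real.rpow_le_rpow_of_exponent_le (by norm_num)
      push_cast
      exact hk
    have hsplit : (2:ℝ) ^ (25 + 24 * Real.logb 2 (φ.norm : ℝ)) =
        (2:ℝ) ^ (25:ℝ) * ((φ.norm : ℝ)) ^ (24:ℝ) := by
      rw [Real.rpow_add (by norm_num)]
      congr 1
      rw [mul_comm (24:ℝ), Real.rpow_mul (by norm_num)]
      rw [Real.rpow_logb (by norm_num) (by norm_num) hNpos]
    have hns : ((φ.norm : ℝ)) ^ (24:ℝ) ≤ ((φ.size : ℝ)) ^ (24:ℝ) := by
      apply Real.rpow_le_rpow (le_of_lt hNpos) _ (by norm_num)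
      exact_mod_cast norm_le_size φ
    have h25 : ((2:ℝ) ^ 25 : ℝ) = (2:ℝ) ^ (25:ℝ) := by
      rw [← Real.rpow_natCast 2 25]; norm_num
    calc ((deIff p).size : ℝ) ≤ (2:ℝ) ^ (25:ℝ) * ((φ.norm : ℝ)) ^ (24:ℝ) := by
          rw [← hsplit]; exact hsz.trans hmono
      _ ≤ (2:ℝ) ^ (25:ℝ) * ((φ.size : ℝ)) ^ (24:ℝ) := by
          apply mul_le_mul_of_nonneg_left hns (by positivity)
      _ = 2 ^ 25 * (φ.size : ℝ) ^ (24:ℝ) := by rw [h25]
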